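/- Let p ≥ 2, l ≥ 1, K ≥ 1, and q a prime with K(p−1) ≤ q−1. If s_0,...,s_{K-1} ∈ [0, p^l − 1] have base-p digit vectors s_k^vec ∈ {0,...,p−1}^l, then composing (with weights p^i) the componentwise modulo-q sum of the digit vectors yields exactly Σ_k s_k. -/
import Mathlib


/-- Composing (with weights `p^i`) the componentwise modulo-`q` sum of the
base-`p` digit vectors of `K` numbers recovers the natural sum of the numbers,
provided `K (p-1) ≤ q-1`. -/
theorem composition_of_mod_q_digit_sum (p l K q : ℕ) (hp : 2 ≤ p) (hl : 1 ≤ l)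
    (hK : 1 ≤ K) (hq : q.Prime) (hKpq : K * (p - 1) ≤ q - 1)
    (s : Fin K → ℕ) (hs : ∀ k, s k ≤ p ^ l - 1)
    (v : Fin K → Fin l → ℕ) (hv : ∀ k i, v k i ≤ p - 1)
    (hdec : ∀ k, ∑ i, v k i * p ^ (i : ℕ) = s k) :
    ∑ i, ((∑ k, v k i) % q) * p ^ (i : ℕ) = ∑ k, s k := by
  have hmod : ∀ i, (∑ k, v k i) % q = ∑ k, v k i := by
    intro i
    apply Nat.mod_eq_of_lt
    calc ∑ k, v k i ≤ ∑ _k : Fin K, (p - 1) :=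
          Finset.sum_le_sum (fun k _ => hv k i)
      _ = K * (p - 1) := by simp [Finset.sum_const, mul_comm]
      _ ≤ q - 1 := hKpq
      _ < q := Nat.sub_lt hq.pos one_pos
  simp only [hmod]
  simp only [Finset.sum_mul]; rw [Finset.sum_comm]
  simp [Finset.sum_mul, hdec]
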